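/- arXiv:1303.2956 — 2 statements merged into one kernel-verified Lean document; each statement's English description precedes it below -/
import Mathlib

section
/- Let γ(u,t) be a one-parameter family of smooth partially null curves in E⁴₁ with speed v = ‖∂γ/∂u‖, partially null Frenet frame {T, N, B₁, B₂} with curvatures k₁, k₂ (and k₃ = 0), and flow ∂γ/∂t = β₁T + β₂N + β₃B₁ + β₄B₂. Then the flow is inextensible (i.e. ∂v/∂t = 0 for all u, t) if and only if ∂β₁/∂u = β₂ k₁ v. -/
/-!
Formalization of inextensible flows of partially null / pseudo null curves in
Minkowski space-time `E⁴₁` (ℝ⁴ with signature (-,+,+,+)).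
-/

noncomputable section

/-- The Minkowski bilinear form on `ℝ⁴` with signature `(-,+,+,+)`. -/
def mink (v w : Fin 4 → ℝ) : ℝ :=
  -(v 0 * w 0) + v 1 * w 1 + v 2 * w 2 + v 3 * w 3

/-- The Minkowski norm `‖v‖ = √|⟨v,v⟩|`. -/
def mnorm (v : Fin 4 → ℝ) : ℝ := Real.sqrt |mink v v|

/-!
Since `⟨T, T⟩ = 1`, the speed is `v = ⟨∂γ/∂u, T⟩`, and differentiating `⟨T, T⟩ = 1` in `t` kills
the term `⟨∂γ/∂u, ∂T/∂t⟩ = v ⟨T, ∂T/∂t⟩`. Hence `∂v/∂t = ⟨∂²γ/∂t∂u, T⟩`, and after exchanging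
the mixed partials and moving the `u`-derivative off `∂γ/∂t`,
`∂v/∂t = ∂/∂u ⟨∂γ/∂t, T⟩ - ⟨∂γ/∂t, ∂T/∂u⟩ = ∂β₁/∂u - v k₁ β₂`,
because `β₁ = ⟨∂γ/∂t, T⟩` and `β₂ = ⟨∂γ/∂t, N⟩` are frame coordinates.
-/

open Function

section Minkowski

lemma mink_comm (a b : Fin 4 → ℝ) : mink a b = mink b a := by
  simp only [mink]; ring

lemma mink_add_left (a b c : Fin 4 → ℝ) : mink (a + b) c = mink a c + mink b c := by
  simp only [mink, Pi.add_apply]; ring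

lemma mink_smul_left (r : ℝ) (a b : Fin 4 → ℝ) : mink (r • a) b = r * mink a b := by
  simp only [mink, Pi.smul_apply, smul_eq_mul]; ring

lemma mink_smul_right (r : ℝ) (a b : Fin 4 → ℝ) : mink a (r • b) = r * mink a b := by
  rw [mink_comm, mink_smul_left, mink_comm]

lemma HasDerivAt.mink {A B : ℝ → Fin 4 → ℝ} {A' B' : Fin 4 → ℝ} {t : ℝ}
    (hA : HasDerivAt A A' t) (hB : HasDerivAt B B' t) :
    HasDerivAt (fun x => mink (A x) (B x)) (mink A' (B t) + mink (A t) B') t := by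
  have h (i : Fin 4) : HasDerivAt (fun x => A x i * B x i) (A' i * B t i + A t i * B' i) t :=
    (hasDerivAt_pi.1 hA i).mul (hasDerivAt_pi.1 hB i)
  exact ((((h 0).neg.add (h 1)).add (h 2)).add (h 3)).congr_deriv (by simp only [_root_.mink]; ring)

lemma mink_hasDerivAt_eq_zero_of_mink_self_const {A : ℝ → Fin 4 → ℝ} {A' : Fin 4 → ℝ}
    {c t : ℝ} (hc : ∀ x, mink (A x) (A x) = c) (hA : HasDerivAt A A' t) :
    mink (A t) A' = 0 := by
  have h := (hA.mink hA).unique ((hasDerivAt_const t c).congr_of_eventuallyEq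
    (Filter.Eventually.of_forall hc))
  rw [mink_comm A'] at h
  linarith

lemma mink_frame_left_eq_fst {T N B₁ B₂ : Fin 4 → ℝ} (β₁ β₂ β₃ β₄ : ℝ)
    (hTT : mink T T = 1) (hTN : mink T N = 0) (hTB₁ : mink T B₁ = 0) (hTB₂ : mink T B₂ = 0) :
    mink (β₁ • T + β₂ • N + β₃ • B₁ + β₄ • B₂) T = β₁ := by
  simp only [mink_add_left, mink_smul_left]
  rw [mink_comm N, mink_comm B₁, mink_comm B₂, hTT, hTN, hTB₁, hTB₂]
  ring

lemma mink_frame_left_eq_snd {T N B₁ B₂ : Fin 4 → ℝ} (β₁ β₂ β₃ β₄ : ℝ)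
    (hNN : mink N N = 1) (hTN : mink T N = 0) (hNB₁ : mink N B₁ = 0) (hNB₂ : mink N B₂ = 0) :
    mink (β₁ • T + β₂ • N + β₃ • B₁ + β₄ • B₂) N = β₂ := by
  simp only [mink_add_left, mink_smul_left]
  rw [mink_comm B₁, mink_comm B₂, hNN, hTN, hNB₁, hNB₂]
  ring

end Minkowski

section PartialDerivatives

variable {E : Type*} [NormedAddCommGroup E] [NormedSpace ℝ E] {f : ℝ → ℝ → E} {u t : ℝ}

lemma hasDerivAt_slice_fst {L : ℝ × ℝ →L[ℝ] E} (hf : HasFDerivAt (uncurry f) L (u, t)) :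
    HasDerivAt (fun x => f x t) (L (1, 0)) u :=
  hf.comp_hasDerivAt (f := fun x => (x, t)) u
    ((hasDerivAt_id u).prodMk (hasDerivAt_const u t))

lemma hasDerivAt_slice_snd {L : ℝ × ℝ →L[ℝ] E} (hf : HasFDerivAt (uncurry f) L (u, t)) :
    HasDerivAt (fun s => f u s) (L (0, 1)) t :=
  hf.comp_hasDerivAt (f := fun s => (u, s)) t
    ((hasDerivAt_const t u).prodMk (hasDerivAt_id t))

theorem ContDiff.exists_hasDerivAt_mixed_partials (hf : ContDiff ℝ 2 (uncurry f)) (u t : ℝ) :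
    ∃ D : E, HasDerivAt (fun x => deriv (fun s => f x s) t) D u ∧
      HasDerivAt (fun s => deriv (fun x => f x s) u) D t := by
  have hdiff : Differentiable ℝ (uncurry f) := hf.differentiable (by norm_num)
  have hdiff' : DifferentiableAt ℝ (fderiv ℝ (uncurry f)) (u, t) :=
    (hf.fderiv_right (m := 1) (by norm_num)).differentiable one_ne_zero _
  set F := fderiv ℝ (uncurry f)
  have hsnd : (fun x => deriv (fun s => f x s) t) = fun x => F (x, t) (0, 1) :=
    funext fun x => (hasDerivAt_slice_snd (hdiff (x, t)).hasFDerivAt).deriv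
  have hfst : (fun s => deriv (fun x => f x s) u) = fun s => F (u, s) (1, 0) :=
    funext fun s => (hasDerivAt_slice_fst (hdiff (u, s)).hasFDerivAt).deriv
  have hFw (w : ℝ × ℝ) : HasFDerivAt (fun p => F p w)
      ((ContinuousLinearMap.apply ℝ E w).comp (fderiv ℝ F (u, t))) (u, t) :=
    (ContinuousLinearMap.apply ℝ E w).hasFDerivAt.comp (u, t) hdiff'.hasFDerivAt
  refine ⟨fderiv ℝ F (u, t) (1, 0) (0, 1), ?_, ?_⟩
  · rw [hsnd]
    exact hasDerivAt_slice_fst (f := fun x s => F (x, s) (0, 1)) (hFw (0, 1))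
  · rw [hfst, (hf.contDiffAt.isSymmSndFDerivAt (by simp)).eq]
    exact hasDerivAt_slice_snd (f := fun x s => F (x, s) (1, 0)) (hFw (1, 0))

end PartialDerivatives

theorem deriv_speed_eq {γ T N : ℝ → ℝ → Fin 4 → ℝ} {v k₁ : ℝ → ℝ → ℝ}
    (hγ : ContDiff ℝ 2 (uncurry γ)) (hTdiff : Differentiable ℝ (uncurry T))
    (hTT : ∀ u t, mink (T u t) (T u t) = 1)
    (hγu : ∀ u t, deriv (fun x => γ x t) u = v u t • T u t)
    (hTu : ∀ u t, deriv (fun x => T x t) u = (v u t * k₁ u t) • N u t) (u t : ℝ) :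
    deriv (fun s => v u s) t =
      deriv (fun x => mink (deriv (fun s => γ x s) t) (T x t)) u -
        v u t * k₁ u t * mink (deriv (fun s => γ u s) t) (N u t) := by
  have hv : (fun s => v u s) = fun s => mink (deriv (fun x => γ x s) u) (T u s) :=
    funext fun s => by rw [hγu, mink_smul_left, hTT, mul_one]
  obtain ⟨D, hDu, hDt⟩ := hγ.exists_hasDerivAt_mixed_partials u t
  have hTt := hasDerivAt_slice_snd (hTdiff (u, t)).hasFDerivAt
  have hTu' : HasDerivAt (fun x => T x t) ((v u t * k₁ u t) • N u t) u := by
    rw [← hTu]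
    exact (hasDerivAt_slice_fst (hTdiff (u, t)).hasFDerivAt).differentiableAt.hasDerivAt
  have hTt_orth := mink_hasDerivAt_eq_zero_of_mink_self_const (hTT u) hTt
  rw [hv, (hDt.mink hTt).deriv, (hDu.mink hTu').deriv, hγu, mink_smul_left, hTt_orth,
    mink_smul_right]
  ring

theorem inextensible_iff_partially_null_general
    (γ T N B₁ B₂ : ℝ → ℝ → (Fin 4 → ℝ))
    (v k₁ β₁ β₂ β₃ β₄ : ℝ → ℝ → ℝ)
    (hγsmooth : ContDiff ℝ (⊤ : ℕ∞) (fun p : ℝ × ℝ => γ p.1 p.2))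
    (hTsmooth : ContDiff ℝ (⊤ : ℕ∞) (fun p : ℝ × ℝ => T p.1 p.2))
    (hTT : ∀ u t : ℝ, mink (T u t) (T u t) = 1)
    (hNN : ∀ u t : ℝ, mink (N u t) (N u t) = 1)
    (hTN : ∀ u t : ℝ, mink (T u t) (N u t) = 0)
    (hTB₁ : ∀ u t : ℝ, mink (T u t) (B₁ u t) = 0)
    (hTB₂ : ∀ u t : ℝ, mink (T u t) (B₂ u t) = 0)
    (hNB₁ : ∀ u t : ℝ, mink (N u t) (B₁ u t) = 0)
    (hNB₂ : ∀ u t : ℝ, mink (N u t) (B₂ u t) = 0)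
    -- speed, tangent and Frenet equations (∂/∂s = (1/v)∂/∂u, k₃ = 0)
    (hT : ∀ u t : ℝ, deriv (fun x => γ x t) u = v u t • T u t)
    (hfr₁ : ∀ u t : ℝ, deriv (fun x => T x t) u = (v u t * k₁ u t) • N u t)
    (hflow : ∀ u t : ℝ, deriv (fun x => γ u x) t =
      β₁ u t • T u t + β₂ u t • N u t + β₃ u t • B₁ u t + β₄ u t • B₂ u t) :
    (∀ u t : ℝ, deriv (fun x => v u x) t = 0) ↔
      (∀ u t : ℝ, deriv (fun x => β₁ x t) u = β₂ u t * k₁ u t * v u t) := by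
  have key : ∀ u t, deriv (fun x => v u x) t =
      deriv (fun x => β₁ x t) u - β₂ u t * k₁ u t * v u t := by
    intro u t
    have hβ₁ : (fun x => β₁ x t) = fun x => mink (deriv (fun s => γ x s) t) (T x t) :=
      funext fun x => by
        rw [hflow, mink_frame_left_eq_fst _ _ _ _ (hTT x t) (hTN x t) (hTB₁ x t) (hTB₂ x t)]
    rw [deriv_speed_eq (hγsmooth.of_le (by norm_cast))
        (hTsmooth.differentiable (by simp)) hTT hT hfr₁, hβ₁, hflow,
      mink_frame_left_eq_snd _ _ _ _ (hNN u t) (hTN u t) (hNB₁ u t) (hNB₂ u t)]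
    ring
  simp only [key, sub_eq_zero]

theorem inextensible_iff_partially_null
    (γ T N B₁ B₂ : ℝ → ℝ → (Fin 4 → ℝ))
    (v k₁ k₂ β₁ β₂ β₃ β₄ : ℝ → ℝ → ℝ)
    (hγsmooth : ContDiff ℝ (⊤ : ℕ∞) (fun p : ℝ × ℝ => γ p.1 p.2))
    (hTsmooth : ContDiff ℝ (⊤ : ℕ∞) (fun p : ℝ × ℝ => T p.1 p.2))
    (hNsmooth : ContDiff ℝ (⊤ : ℕ∞) (fun p : ℝ × ℝ => N p.1 p.2))
    (hB₁smooth : ContDiff ℝ (⊤ : ℕ∞) (fun p : ℝ × ℝ => B₁ p.1 p.2))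
    (hB₂smooth : ContDiff ℝ (⊤ : ℕ∞) (fun p : ℝ × ℝ => B₂ p.1 p.2))
    (hk₁smooth : ContDiff ℝ (⊤ : ℕ∞) (fun p : ℝ × ℝ => k₁ p.1 p.2))
    (hk₂smooth : ContDiff ℝ (⊤ : ℕ∞) (fun p : ℝ × ℝ => k₂ p.1 p.2))
    (hβ₁smooth : ContDiff ℝ (⊤ : ℕ∞) (fun p : ℝ × ℝ => β₁ p.1 p.2))
    (hβ₂smooth : ContDiff ℝ (⊤ : ℕ∞) (fun p : ℝ × ℝ => β₂ p.1 p.2))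
    (hβ₃smooth : ContDiff ℝ (⊤ : ℕ∞) (fun p : ℝ × ℝ => β₃ p.1 p.2))
    (hβ₄smooth : ContDiff ℝ (⊤ : ℕ∞) (fun p : ℝ × ℝ => β₄ p.1 p.2))
    (hTT : ∀ u t : ℝ, mink (T u t) (T u t) = 1)
    (hNN : ∀ u t : ℝ, mink (N u t) (N u t) = 1)
    (hB₁B₁ : ∀ u t : ℝ, mink (B₁ u t) (B₁ u t) = 0)
    (hB₂B₂ : ∀ u t : ℝ, mink (B₂ u t) (B₂ u t) = 0)
    (hB₁B₂ : ∀ u t : ℝ, mink (B₁ u t) (B₂ u t) = 1)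
    (hTN : ∀ u t : ℝ, mink (T u t) (N u t) = 0)
    (hTB₁ : ∀ u t : ℝ, mink (T u t) (B₁ u t) = 0)
    (hTB₂ : ∀ u t : ℝ, mink (T u t) (B₂ u t) = 0)
    (hNB₁ : ∀ u t : ℝ, mink (N u t) (B₁ u t) = 0)
    (hNB₂ : ∀ u t : ℝ, mink (N u t) (B₂ u t) = 0)
    -- speed, tangent and Frenet equations (∂/∂s = (1/v)∂/∂u, k₃ = 0)
    (hv : ∀ u t : ℝ, v u t = mnorm (deriv (fun x => γ x t) u))
    (hvpos : ∀ u t : ℝ, 0 < v u t)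
    (hT : ∀ u t : ℝ, deriv (fun x => γ x t) u = v u t • T u t)
    (hfr₁ : ∀ u t : ℝ, deriv (fun x => T x t) u = (v u t * k₁ u t) • N u t)
    (hfr₂ : ∀ u t : ℝ, deriv (fun x => N x t) u =
      (v u t * -(k₁ u t)) • T u t + (v u t * k₂ u t) • B₁ u t)
    (hfr₃ : ∀ u t : ℝ, deriv (fun x => B₁ x t) u = 0)
    (hfr₄ : ∀ u t : ℝ, deriv (fun x => B₂ x t) u = (v u t * -(k₂ u t)) • N u t)
    (hflow : ∀ u t : ℝ, deriv (fun x => γ u x) t =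
      β₁ u t • T u t + β₂ u t • N u t + β₃ u t • B₁ u t + β₄ u t • B₂ u t) :
    (∀ u t : ℝ, deriv (fun x => v u x) t = 0) ↔
      (∀ u t : ℝ, deriv (fun x => β₁ x t) u = β₂ u t * k₁ u t * v u t) :=
  inextensible_iff_partially_null_general γ T N B₁ B₂ v k₁ β₁ β₂ β₃ β₄ hγsmooth hTsmooth hTT hNN hTN
    hTB₁ hTB₂ hNB₁ hNB₂ hT hfr₁ hflow
end
end

section
/- Let γ(s,t) be an arclength-parametrized inextensible flow of pseudo null curves in E⁴₁ with pseudo null Frenet frame {T, N, B₁, B₂}, curvatures k₁ = 1, k₂, k₃, and flow ∂γ/∂t = α₁T + α₂N + α₃B₁ + α₄B₂ (so ∂α₁/∂s = α₄). Then the tangent evolves by ∂T/∂t = (∂α₂/∂s + α₁ + α₃k₃) N + (∂α₃/∂s + α₂k₂ − α₄k₃) B₁ + (∂α₄/∂s − α₃k₂) B₂. -/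
/-!
As `T = ∂γ/∂s` and `γ` is `C²`, the partial derivatives commute:
`∂T/∂t = ∂/∂s (∂γ/∂t) = ∂/∂s (α₁T + α₂N + α₃B₁ + α₄B₂)`.
Expanding by the product rule and substituting the Frenet equations, `k₁ = 1` and
`∂α₁/∂s = α₄` gives the stated coefficients.
-/

noncomputable section

open Function

section PartialDerivatives

variable {E : Type*} [NormedAddCommGroup E] [NormedSpace ℝ E]

theorem DifferentiableAt.hasDerivAt_prodMk_left {G : ℝ × ℝ → E} {s t : ℝ}
    (hG : DifferentiableAt ℝ G (s, t)) :
    HasDerivAt (fun x => G (x, t)) (fderiv ℝ G (s, t) (1, 0)) s :=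
  hG.hasFDerivAt.comp_hasDerivAt s ((hasDerivAt_id s).prodMk (hasDerivAt_const s t))

theorem DifferentiableAt.hasDerivAt_prodMk_right {G : ℝ × ℝ → E} {s t : ℝ}
    (hG : DifferentiableAt ℝ G (s, t)) :
    HasDerivAt (fun x => G (s, x)) (fderiv ℝ G (s, t) (0, 1)) t :=
  hG.hasFDerivAt.comp_hasDerivAt t ((hasDerivAt_const t s).prodMk (hasDerivAt_id t))

theorem deriv_deriv_comm_of_contDiff {F : ℝ → ℝ → E} (hF : ContDiff ℝ 2 (uncurry F))
    (s t : ℝ) :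
    deriv (fun x => deriv (fun y => F y x) s) t =
      deriv (fun y => deriv (fun x => F y x) t) s := by
  set G := uncurry F
  have hG : Differentiable ℝ G := hF.differentiable (by norm_num)
  have hG' : Differentiable ℝ (fderiv ℝ G) :=
    (hF.fderiv_right (m := 1) (by norm_num)).differentiable (by norm_num)
  have hsymm : IsSymmSndFDerivAt ℝ G (s, t) :=
    hF.contDiffAt.isSymmSndFDerivAt (by simp [minSmoothness_of_isRCLikeNormedField])
  have h_fst : (fun x => deriv (fun y => F y x) s) = fun x => fderiv ℝ G (s, x) (1, 0) :=
    funext fun x => (hG (s, x)).hasDerivAt_prodMk_left.deriv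
  have h_snd : (fun y => deriv (fun x => F y x) t) = fun y => fderiv ℝ G (y, t) (0, 1) :=
    funext fun y => (hG (y, t)).hasDerivAt_prodMk_right.deriv
  rw [h_fst, h_snd,
    ((hG' (s, t)).hasDerivAt_prodMk_right.clm_apply (hasDerivAt_const _ _)).deriv,
    ((hG' (s, t)).hasDerivAt_prodMk_left.clm_apply (hasDerivAt_const _ _)).deriv]
  simpa using hsymm.eq (0, 1) (1, 0)

theorem hasDerivAt_left_of_differentiable_uncurry {F : ℝ → ℝ → E}
    (hF : Differentiable ℝ (uncurry F)) (s t : ℝ) :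
    HasDerivAt (fun x => F x t) (deriv (fun x => F x t) s) s :=
  (hF (s, t)).hasDerivAt_prodMk_left.differentiableAt.hasDerivAt

end PartialDerivatives

theorem tangent_evolution_pseudo_null_general
    (γ T N B₁ B₂ : ℝ → ℝ → (Fin 4 → ℝ))
    (k₁ k₂ k₃ α₁ α₂ α₃ α₄ : ℝ → ℝ → ℝ)
    (hγsmooth : ContDiff ℝ (⊤ : ℕ∞) (fun p : ℝ × ℝ => γ p.1 p.2))
    (hTsmooth : ContDiff ℝ (⊤ : ℕ∞) (fun p : ℝ × ℝ => T p.1 p.2))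
    (hNsmooth : ContDiff ℝ (⊤ : ℕ∞) (fun p : ℝ × ℝ => N p.1 p.2))
    (hB₁smooth : ContDiff ℝ (⊤ : ℕ∞) (fun p : ℝ × ℝ => B₁ p.1 p.2))
    (hB₂smooth : ContDiff ℝ (⊤ : ℕ∞) (fun p : ℝ × ℝ => B₂ p.1 p.2))
    (hα₁smooth : ContDiff ℝ (⊤ : ℕ∞) (fun p : ℝ × ℝ => α₁ p.1 p.2))
    (hα₂smooth : ContDiff ℝ (⊤ : ℕ∞) (fun p : ℝ × ℝ => α₂ p.1 p.2))
    (hα₃smooth : ContDiff ℝ (⊤ : ℕ∞) (fun p : ℝ × ℝ => α₃ p.1 p.2))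
    (hα₄smooth : ContDiff ℝ (⊤ : ℕ∞) (fun p : ℝ × ℝ => α₄ p.1 p.2))
    -- arclength parametrization and pseudo null Frenet equations (k₁ = 1)
    (hk₁ : ∀ s t : ℝ, k₁ s t = 1)
    (hT : ∀ s t : ℝ, T s t = deriv (fun x => γ x t) s)
    (hfr₁ : ∀ s t : ℝ, deriv (fun x => T x t) s = k₁ s t • N s t)
    (hfr₂ : ∀ s t : ℝ, deriv (fun x => N x t) s = k₂ s t • B₁ s t)
    (hfr₃ : ∀ s t : ℝ, deriv (fun x => B₁ x t) s = k₃ s t • N s t - k₂ s t • B₂ s t)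
    (hfr₄ : ∀ s t : ℝ, deriv (fun x => B₂ x t) s = -(k₁ s t) • T s t - k₃ s t • B₁ s t)
    (hflow : ∀ s t : ℝ, deriv (fun x => γ s x) t =
      α₁ s t • T s t + α₂ s t • N s t + α₃ s t • B₁ s t + α₄ s t • B₂ s t)
    -- inextensibility: ∂α₁/∂s = α₄
    (hinext : ∀ s t : ℝ, deriv (fun x => α₁ x t) s = α₄ s t) :
    ∀ s t : ℝ, deriv (fun x => T s x) t =
      (deriv (fun x => α₂ x t) s + α₁ s t + α₃ s t * k₃ s t) • N s t +
      (deriv (fun x => α₃ x t) s + α₂ s t * k₂ s t - α₄ s t * k₃ s t) • B₁ s t +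
      (deriv (fun x => α₄ x t) s - α₃ s t * k₂ s t) • B₂ s t := by
  intro s t
  have hX {X : ℝ → ℝ → Fin 4 → ℝ} (hXs : ContDiff ℝ (⊤ : ℕ∞) (uncurry X)) :=
    hasDerivAt_left_of_differentiable_uncurry (hXs.differentiable (by simp)) s t
  have ha {a : ℝ → ℝ → ℝ} (has : ContDiff ℝ (⊤ : ℕ∞) (uncurry a)) :=
    hasDerivAt_left_of_differentiable_uncurry (has.differentiable (by simp)) s t
  have hframe := ((((ha hα₁smooth).fun_smul (hX hTsmooth)).fun_add
    ((ha hα₂smooth).fun_smul (hX hNsmooth))).fun_add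
    ((ha hα₃smooth).fun_smul (hX hB₁smooth))).fun_add ((ha hα₄smooth).fun_smul (hX hB₂smooth))
  calc deriv (fun x => T s x) t = deriv (fun x => deriv (fun y => γ y x) s) t := by
        simp only [hT]
    _ = deriv (fun y => deriv (fun x => γ y x) t) s :=
        deriv_deriv_comm_of_contDiff (hγsmooth.of_le (WithTop.coe_le_coe.mpr le_top)) s t
    _ = deriv (fun y => α₁ y t • T y t + α₂ y t • N y t + α₃ y t • B₁ y t + α₄ y t • B₂ y t) s := by
        simp only [hflow]
    _ = _ := by
        rw [hframe.deriv, hfr₁, hfr₂, hfr₃, hfr₄, hinext, hk₁]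
        module

theorem tangent_evolution_pseudo_null
    (γ T N B₁ B₂ : ℝ → ℝ → (Fin 4 → ℝ))
    (k₁ k₂ k₃ α₁ α₂ α₃ α₄ : ℝ → ℝ → ℝ)
    (hγsmooth : ContDiff ℝ (⊤ : ℕ∞) (fun p : ℝ × ℝ => γ p.1 p.2))
    (hTsmooth : ContDiff ℝ (⊤ : ℕ∞) (fun p : ℝ × ℝ => T p.1 p.2))
    (hNsmooth : ContDiff ℝ (⊤ : ℕ∞) (fun p : ℝ × ℝ => N p.1 p.2))
    (hB₁smooth : ContDiff ℝ (⊤ : ℕ∞) (fun p : ℝ × ℝ => B₁ p.1 p.2))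
    (hB₂smooth : ContDiff ℝ (⊤ : ℕ∞) (fun p : ℝ × ℝ => B₂ p.1 p.2))
    (hk₂smooth : ContDiff ℝ (⊤ : ℕ∞) (fun p : ℝ × ℝ => k₂ p.1 p.2))
    (hk₃smooth : ContDiff ℝ (⊤ : ℕ∞) (fun p : ℝ × ℝ => k₃ p.1 p.2))
    (hα₁smooth : ContDiff ℝ (⊤ : ℕ∞) (fun p : ℝ × ℝ => α₁ p.1 p.2))
    (hα₂smooth : ContDiff ℝ (⊤ : ℕ∞) (fun p : ℝ × ℝ => α₂ p.1 p.2))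
    (hα₃smooth : ContDiff ℝ (⊤ : ℕ∞) (fun p : ℝ × ℝ => α₃ p.1 p.2))
    (hα₄smooth : ContDiff ℝ (⊤ : ℕ∞) (fun p : ℝ × ℝ => α₄ p.1 p.2))
    (hTT : ∀ s t : ℝ, mink (T s t) (T s t) = 1)
    (hB₁B₁ : ∀ s t : ℝ, mink (B₁ s t) (B₁ s t) = 1)
    (hNN : ∀ s t : ℝ, mink (N s t) (N s t) = 0)
    (hB₂B₂ : ∀ s t : ℝ, mink (B₂ s t) (B₂ s t) = 0)
    (hNB₂ : ∀ s t : ℝ, mink (N s t) (B₂ s t) = 1)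
    (hTN : ∀ s t : ℝ, mink (T s t) (N s t) = 0)
    (hTB₁ : ∀ s t : ℝ, mink (T s t) (B₁ s t) = 0)
    (hTB₂ : ∀ s t : ℝ, mink (T s t) (B₂ s t) = 0)
    (hNB₁ : ∀ s t : ℝ, mink (N s t) (B₁ s t) = 0)
    (hB₁B₂ : ∀ s t : ℝ, mink (B₁ s t) (B₂ s t) = 0)
    -- arclength parametrization and pseudo null Frenet equations (k₁ = 1)
    (hk₁ : ∀ s t : ℝ, k₁ s t = 1)
    (hT : ∀ s t : ℝ, T s t = deriv (fun x => γ x t) s)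
    (hunit : ∀ s t : ℝ, mnorm (deriv (fun x => γ x t) s) = 1)
    (hfr₁ : ∀ s t : ℝ, deriv (fun x => T x t) s = k₁ s t • N s t)
    (hfr₂ : ∀ s t : ℝ, deriv (fun x => N x t) s = k₂ s t • B₁ s t)
    (hfr₃ : ∀ s t : ℝ, deriv (fun x => B₁ x t) s = k₃ s t • N s t - k₂ s t • B₂ s t)
    (hfr₄ : ∀ s t : ℝ, deriv (fun x => B₂ x t) s = -(k₁ s t) • T s t - k₃ s t • B₁ s t)
    (hflow : ∀ s t : ℝ, deriv (fun x => γ s x) t =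
      α₁ s t • T s t + α₂ s t • N s t + α₃ s t • B₁ s t + α₄ s t • B₂ s t)
    -- inextensibility: ∂α₁/∂s = α₄
    (hinext : ∀ s t : ℝ, deriv (fun x => α₁ x t) s = α₄ s t) :
    ∀ s t : ℝ, deriv (fun x => T s x) t =
      (deriv (fun x => α₂ x t) s + α₁ s t + α₃ s t * k₃ s t) • N s t +
      (deriv (fun x => α₃ x t) s + α₂ s t * k₂ s t - α₄ s t * k₃ s t) • B₁ s t +
      (deriv (fun x => α₄ x t) s - α₃ s t * k₂ s t) • B₂ s t :=
  tangent_evolution_pseudo_null_general γ T N B₁ B₂ k₁ k₂ k₃ α₁ α₂ α₃ α₄ hγsmooth hTsmooth hNsmooth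
    hB₁smooth hB₂smooth hα₁smooth hα₂smooth hα₃smooth hα₄smooth hk₁ hT hfr₁ hfr₂ hfr₃ hfr₄ hflow
    hinext
end
end
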